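/- Let 1/2 < H < 1 and H − 1/2 < λ < 1/2. There exists a constant C depending only on H, T and λ such that E[ sup_{0≤t≤T} ∫_0^{t̄_k} ρ_{H,2}(t̄_k, s) |A^k(s) − B(s)| ds ] ≤ C ε_k^{1−2λ} for every k ≥ 1, where ρ_{H,2}(t,s) := s^{−H−1/2} ∫_s^t u^{H−3/2} (u−s)^{H−1/2} du. -/

import Mathlib

open MeasureTheory ProbabilityTheory Filter Set
open scoped ENNReal NNReal Topology Classical

noncomputable section

variable {Ω : Type} [MeasurableSpace Ω]

/-- One-dimensional standard Brownian motion: measurable in space, starting at `0`,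
with a.s. continuous paths, Gaussian increments of variance `t - s`, and independent
increments. -/
structure IsBM (P : Measure Ω) (B : ℝ → Ω → ℝ) : Prop where
  meas : ∀ t, Measurable (B t)
  start : ∀ᵐ ω ∂P, B 0 ω = 0
  cont : ∀ᵐ ω ∂P, Continuous fun t => B t ω
  gauss : ∀ s t : ℝ, 0 ≤ s → s ≤ t →
    P.map (fun ω => B t ω - B s ω) = gaussianReal 0 ((t - s).toNNReal)
  indep : ∀ u : ℕ → ℝ, Monotone u → (∀ i, 0 ≤ u i) →
    iIndepFun (fun i ω => B (u (i + 1)) ω - B (u i) ω) P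

/-- The hitting times `T^k_n`: `T^k_0 = 0` and
`T^k_{n+1} = inf {t > T^k_n : |B(t) - B(T^k_n)| = ε}`. -/
def hitT (B : ℝ → Ω → ℝ) (ε : ℝ) : ℕ → Ω → ℝ
  | 0 => fun _ => 0
  | n + 1 => fun ω =>
      sInf {t : ℝ | hitT B ε n ω < t ∧ |B t ω - B (hitT B ε n ω) ω| = ε}

/-- The sign `σ^k_n` of the `n`-th increment of `B` along the hitting times. -/
def wSign (B : ℝ → Ω → ℝ) (ε : ℝ) (n : ℕ) (ω : Ω) : ℝ :=
  if 0 < B (hitT B ε n ω) ω - B (hitT B ε (n - 1) ω) ω then 1 else -1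

/-- The continuous-time random walk `A^k(t) = Σ_{n ≥ 1} ε σ^k_n 1{T^k_n ≤ t}`. -/
def walk (B : ℝ → Ω → ℝ) (ε : ℝ) (t : ℝ) (ω : Ω) : ℝ :=
  ∑' n : ℕ, if hitT B ε (n + 1) ω ≤ t then ε * wSign B ε (n + 1) ω else 0

/-- The kernel `ρ_{H,2}(t,s) = s^{−H−1/2} ∫_s^t u^{H−3/2}(u−s)^{H−1/2} du`. -/
def rho2 (H : ℝ) (t s : ℝ) : ℝ :=
  s ^ (-H - 1 / 2) * ∫ u in s..t, u ^ (H - 3 / 2) * (u - s) ^ (H - 1 / 2)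

/-- The last hitting time before `t`: `t̄_k = max{T^k_n : T^k_n ≤ t}`. -/
def lastT (B : ℝ → Ω → ℝ) (ε : ℝ) (t : ℝ) (ω : Ω) : ℝ :=
  sSup {r : ℝ | (∃ n : ℕ, r = hitT B ε n ω) ∧ r ≤ t}

/-!
The kernel satisfies `ρ_{H,2}(t̄, s) ≤ K s^{-H-1/2}` on `0 < s ≤ t̄ ≤ T`, so the supremum over
`t` is dominated by the single integral `K ∫_0^T s^{-H-1/2} |A(s) - B(s)| ds`. Pathwise,
`|A(s) - B(s)| ≤ ε`, and as long as `|B|` stays below `ε` on `[0, s]` the walk has not moved, so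
that `|A(s) - B(s)| ≤ min(ε, M_s)` with `M_s` the running maximum of `|B|`. Ottaviani's maximal
inequality and Chebyshev give `P(M_s > x) ≤ min(1, 8 s / x²) ≤ (8 s / x²)^λ`; integrating this tail
over `x ∈ (0, ε)` yields `E min(ε, M_s) ≤ (8 s)^λ ε^{1-2λ} / (1 - 2λ)`, and
`∫_0^T s^{-H-1/2+λ} ds < ∞` because `λ > H - 1/2`.
-/

lemma ofReal_integral_le_lintegral_ofReal {α : Type*} [MeasurableSpace α] {μ : Measure α}
    {f : α → ℝ} (hf : 0 ≤ᵐ[μ] f) :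
    ENNReal.ofReal (∫ x, f x ∂μ) ≤ ∫⁻ x, ENNReal.ofReal (f x) ∂μ :=
  calc ENNReal.ofReal (∫ x, f x ∂μ) ≤ ‖∫ x, f x ∂μ‖ₑ := by
        rw [Real.enorm_eq_ofReal_abs]; exact ENNReal.ofReal_le_ofReal (le_abs_self _)
    _ ≤ ∫⁻ x, ‖f x‖ₑ ∂μ := enorm_integral_le_lintegral_enorm f
    _ = ∫⁻ x, ENNReal.ofReal (f x) ∂μ :=
        lintegral_congr_ae (hf.mono fun x hx => Real.enorm_eq_ofReal hx)

lemma ofReal_iSup_le {ι : Sort*} {f : ι → ℝ} {L : ℝ≥0∞} (h : ∀ i, ENNReal.ofReal (f i) ≤ L) :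
    ENNReal.ofReal (⨆ i, f i) ≤ L := by
  rcases eq_or_ne L ⊤ with hL | hL
  · exact hL ▸ le_top
  rw [ENNReal.ofReal_le_iff_le_toReal hL]
  exact Real.iSup_le (fun i => (ENNReal.ofReal_le_iff_le_toReal hL).1 (h i)) ENNReal.toReal_nonneg

lemma lintegral_Ioc_rpow {b q : ℝ} (hb : 0 ≤ b) (hq : -1 < q) :
    ∫⁻ t in Ioc 0 b, ENNReal.ofReal (t ^ q) = ENNReal.ofReal (b ^ (q + 1) / (q + 1)) := by
  rw [← ofReal_integral_eq_lintegral_ofReal (intervalIntegral.intervalIntegrable_rpow' hq).1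
      (ae_restrict_of_forall_mem measurableSet_Ioc fun t ht => Real.rpow_nonneg ht.1.le q),
    ← intervalIntegral.integral_of_le hb, integral_rpow (Or.inl hq),
    Real.zero_rpow (by linarith), sub_zero]

lemma min_one_le_rpow {y p : ℝ} (hy : 0 ≤ y) (hp0 : 0 ≤ p) (hp1 : p ≤ 1) : min 1 y ≤ y ^ p := by
  rcases le_total 1 y with h | h
  · exact (min_le_left _ _).trans (Real.one_le_rpow h hp0)
  · calc min 1 y ≤ y ^ (1 : ℝ) := by rw [Real.rpow_one]; exact min_le_right _ _
      _ ≤ y ^ p := Real.rpow_le_rpow_of_exponent_ge' hy h hp0 hp1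

lemma lintegral_min_le_of_meas_lt_le {α : Type*} [MeasurableSpace α] {μ : Measure α}
    {f : α → ℝ≥0∞} (hf : AEMeasurable f μ) {c : ℝ} {g : ℝ → ℝ≥0∞}
    (hg : ∀ t ∈ Ioc 0 c, μ {x | ENNReal.ofReal t < f x} ≤ g t) :
    ∫⁻ x, min (ENNReal.ofReal c) (f x) ∂μ ≤ ∫⁻ t in Ioc 0 c, g t := by
  have hfin : ∀ x, min (ENNReal.ofReal c) (f x) ≠ ⊤ := fun x =>
    ((min_le_left _ _).trans_lt ENNReal.ofReal_lt_top).ne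
  set h : α → ℝ := fun x => (min (ENNReal.ofReal c) (f x)).toReal
  have hh : ∫⁻ x, min (ENNReal.ofReal c) (f x) ∂μ = ∫⁻ x, ENNReal.ofReal (h x) ∂μ := by
    simp only [h, ENNReal.ofReal_toReal (hfin _)]
  rw [hh, lintegral_eq_lintegral_meas_lt μ (ae_of_all _ fun _ => ENNReal.toReal_nonneg)
    (aemeasurable_const.min hf).ennreal_toReal]
  calc ∫⁻ t in Ioi 0, μ {x | t < h x} ≤ ∫⁻ t in Ioi 0, (Ioc 0 c).indicator g t := by
        refine setLIntegral_mono' measurableSet_Ioi fun t ht => ?_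
        by_cases htc : t ≤ c
        · rw [indicator_of_mem (show t ∈ Ioc 0 c from ⟨ht, htc⟩)]
          refine (measure_mono fun x hx => ?_).trans (hg t ⟨ht, htc⟩)
          exact ((ENNReal.ofReal_lt_iff_lt_toReal (le_of_lt ht) (hfin x)).2 hx).trans_le
            (min_le_right _ _)
        · have hempty : {x | t < h x} = ∅ := by
            refine eq_empty_of_forall_notMem fun x (hx : t < h x) => ?_
            have : h x ≤ max c 0 := by
              rw [← ENNReal.toReal_ofReal']
              exact ENNReal.toReal_mono ENNReal.ofReal_ne_top (min_le_left _ _)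
            exact absurd (hx.trans_le this) (not_lt.2 (max_le (le_of_not_ge htc) (le_of_lt ht)))
          rw [hempty, measure_empty]
          exact zero_le
    _ = ∫⁻ t in Ioc 0 c, g t := by
        rw [lintegral_indicator measurableSet_Ioc, Measure.restrict_restrict measurableSet_Ioc,
          inter_eq_left.2 Ioc_subset_Ioi_self]

lemma gaussianReal_lt_abs_le (v : ℝ≥0) {a : ℝ} (ha : 0 < a) :
    gaussianReal 0 v {x | a < |x|} ≤ ENNReal.ofReal (v / a ^ 2) := by
  have hcheb := meas_ge_le_variance_div_sq (memLp_id_gaussianReal' (μ := 0) (v := v) 2 (by simp)) ha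
  rw [variance_id_gaussianReal] at hcheb
  refine (measure_mono fun x (hx : a < |x|) => ?_).trans hcheb
  show a ≤ |id x - ∫ y, id y ∂gaussianReal 0 v|
  simpa only [id, integral_id_gaussianReal, sub_zero] using hx.le

lemma gaussianReal_Icc_le {v : ℝ≥0} (hv : v ≠ 0) (R : ℝ) :
    gaussianReal 0 v (Icc (-R) R) ≤ ENNReal.ofReal ((√(2 * Real.pi * v))⁻¹ * (2 * R)) := by
  have hpdf : ∀ x, gaussianPDF 0 v x ≤ ENNReal.ofReal ((√(2 * Real.pi * v))⁻¹) := fun x => by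
    rw [gaussianPDF, gaussianPDFReal]
    refine ENNReal.ofReal_le_ofReal (mul_le_of_le_one_right (by positivity) ?_)
    exact Real.exp_le_one_iff.2 (div_nonpos_of_nonpos_of_nonneg (by nlinarith) (by positivity))
  calc gaussianReal 0 v (Icc (-R) R)
      ≤ ∫⁻ _ in Icc (-R) R, ENNReal.ofReal ((√(2 * Real.pi * v))⁻¹) := by
        rw [gaussianReal_apply _ hv]; exact lintegral_mono fun x => hpdf x
    _ = ENNReal.ofReal ((√(2 * Real.pi * v))⁻¹ * (2 * R)) := by
        rw [setLIntegral_const, Real.volume_Icc, ← ENNReal.ofReal_mul (by positivity)]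
        ring_nf

section Ottaviani

variable {α : Type*} {X : ℕ → α → ℝ}

def firstPassageSet (X : ℕ → α → ℝ) (b : ℝ) (j : ℕ) : Set α :=
  {ω | b < |∑ i ∈ Finset.range j, X i ω|} ∩
    ⋂ i ∈ Finset.range j, {ω | |∑ k ∈ Finset.range i, X k ω| ≤ b}

lemma pairwise_disjoint_firstPassageSet (b : ℝ) :
    Pairwise fun i j => Disjoint (firstPassageSet X b i) (firstPassageSet X b j) := by
  have hlt : ∀ i j, i < j → Disjoint (firstPassageSet X b i) (firstPassageSet X b j) :=
    fun i j hij => disjoint_left.2 fun ω hi hj => by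
      have hfirst : |∑ k ∈ Finset.range i, X k ω| ≤ b :=
        mem_iInter₂.1 hj.2 i (Finset.mem_range.2 hij)
      exact not_lt.2 hfirst hi.1
  intro i j hij
  rcases lt_or_gt_of_ne hij with h | h
  exacts [hlt i j h, (hlt j i h).symm]

lemma subset_biUnion_firstPassageSet (b : ℝ) (m : ℕ) :
    {ω | ∃ j ≤ m, b < |∑ i ∈ Finset.range j, X i ω|} ⊆
      ⋃ j ∈ Finset.range (m + 1), firstPassageSet X b j := by
  rintro ω ⟨j, hjm, hj⟩
  have hex : ∃ j, b < |∑ i ∈ Finset.range j, X i ω| := ⟨j, hj⟩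
  refine mem_biUnion (x := Nat.find hex)
    (Finset.mem_range.2 (Nat.lt_succ_of_le ((Nat.find_min' hex hj).trans hjm))) ?_
  exact ⟨Nat.find_spec hex, mem_iInter₂.2 fun i hi =>
    not_lt.1 (Nat.find_min hex (Finset.mem_range.1 hi))⟩

lemma firstPassageSet_inter_subset {a : ℝ} {j m : ℕ} (hjm : j ≤ m) :
    firstPassageSet X (2 * a) j ∩ {ω | |∑ i ∈ Finset.Ico j m, X i ω| ≤ a} ⊆
      {ω | a < |∑ i ∈ Finset.range m, X i ω|} := by
  rintro ω ⟨⟨(hj : 2 * a < |∑ i ∈ Finset.range j, X i ω|), -⟩,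
    (hrest : |∑ i ∈ Finset.Ico j m, X i ω| ≤ a)⟩
  have := abs_sub_abs_le_abs_sub (∑ i ∈ Finset.range j, X i ω) (-∑ i ∈ Finset.Ico j m, X i ω)
  rw [abs_neg, sub_neg_eq_add, Finset.sum_range_add_sum_Ico _ hjm] at this
  show a < |∑ i ∈ Finset.range m, X i ω|
  linarith

lemma measurableSet_firstPassageSet_past (b : ℝ) (j : ℕ) :
    MeasurableSet[⨆ i ∈ Iio j, MeasurableSpace.comap (X i) inferInstance]
      (firstPassageSet X b j) := by
  have hS : ∀ k ≤ j, Measurable[⨆ i ∈ Iio j, MeasurableSpace.comap (X i) inferInstance]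
      fun ω => ∑ i ∈ Finset.range k, X i ω := fun k hk =>
    Finset.measurable_sum _ fun i hi => (comap_measurable (X i)).mono
      (le_iSup₂ (f := fun i (_ : i ∈ Iio j) => MeasurableSpace.comap (X i) inferInstance) i
        (lt_of_lt_of_le (Finset.mem_range.1 hi) hk)) le_rfl
  exact (hS j le_rfl (measurableSet_lt measurable_const measurable_abs)).inter
    (Finset.measurableSet_biInter _ fun i hi =>
      hS i (Finset.mem_range.1 hi).le (measurableSet_le measurable_abs measurable_const))

lemma measurableSet_abs_sum_Ico_le_future (a : ℝ) (j m : ℕ) :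
    MeasurableSet[⨆ i ∈ Ici j, MeasurableSpace.comap (X i) inferInstance]
      {ω | |∑ i ∈ Finset.Ico j m, X i ω| ≤ a} :=
  Finset.measurable_sum _ (fun i hi => (comap_measurable (X i)).mono
    (le_iSup₂ (f := fun i (_ : i ∈ Ici j) => MeasurableSpace.comap (X i) inferInstance) i
      (Finset.mem_Ico.1 hi).1) le_rfl)
    (measurableSet_le measurable_abs measurable_const)

variable {mα : MeasurableSpace α} {μ : Measure α}

lemma measure_firstPassageSet_inter (hX : iIndepFun X μ) (hXm : ∀ i, Measurable (X i))
    (a b : ℝ) (j m : ℕ) :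
    μ (firstPassageSet X b j ∩ {ω | |∑ i ∈ Finset.Ico j m, X i ω| ≤ a}) =
      μ (firstPassageSet X b j) * μ {ω | |∑ i ∈ Finset.Ico j m, X i ω| ≤ a} :=
  (Indep_iff _ _ μ).1 (indep_iSup_of_disjoint (fun i => (hXm i).comap_le) hX.iIndep
    (Iio_disjoint_Ici le_rfl)) _ _ (measurableSet_firstPassageSet_past b j)
    (measurableSet_abs_sum_Ico_le_future a j m)

/-- Ottaviani's maximal inequality. -/
theorem measure_exists_lt_abs_partialSum_le [IsProbabilityMeasure μ] (hX : iIndepFun X μ)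
    (hXm : ∀ i, Measurable (X i)) {m : ℕ} {a : ℝ}
    (htail : ∀ j ≤ m, μ {ω | a < |∑ i ∈ Finset.Ico j m, X i ω|} ≤ 2⁻¹) :
    μ {ω | ∃ j ≤ m, 2 * a < |∑ i ∈ Finset.range j, X i ω|} ≤
      2 * μ {ω | a < |∑ i ∈ Finset.range m, X i ω|} := by
  set A := firstPassageSet X (2 * a)
  set C : ℕ → Set α := fun j => {ω | |∑ i ∈ Finset.Ico j m, X i ω| ≤ a}
  have hle : ∀ j, ⨆ i ∈ Iio j, MeasurableSpace.comap (X i) inferInstance ≤ mα :=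
    fun j => iSup₂_le fun i _ => (hXm i).comap_le
  have hCm : ∀ j, MeasurableSet (C j) := fun j =>
    iSup₂_le (fun i _ => (hXm i).comap_le) _ (measurableSet_abs_sum_Ico_le_future a j m)
  have hC : ∀ j ≤ m, 2⁻¹ ≤ μ (C j) := fun j hj => by
    rw [← compl_compl (C j), prob_compl_eq_one_sub (hCm j).compl, ← ENNReal.one_sub_inv_two]
    have hcompl : (C j)ᶜ ⊆ {ω | a < |∑ i ∈ Finset.Ico j m, X i ω|} := fun _ hω =>
      not_le.1 (show ¬ _ ≤ a from hω)
    exact tsub_le_tsub_left ((measure_mono hcompl).trans (htail j hj)) 1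
  calc μ {ω | ∃ j ≤ m, 2 * a < |∑ i ∈ Finset.range j, X i ω|}
      ≤ ∑ j ∈ Finset.range (m + 1), μ (A j) :=
        (measure_mono (subset_biUnion_firstPassageSet _ m)).trans (measure_biUnion_finset_le _ _)
    _ ≤ ∑ j ∈ Finset.range (m + 1), 2 * μ (A j ∩ C j) := by
        refine Finset.sum_le_sum fun j hj => ?_
        rw [measure_firstPassageSet_inter hX hXm, mul_left_comm]
        calc μ (A j) = μ (A j) * (2 * 2⁻¹) := by rw [ENNReal.mul_inv_cancel two_ne_zero
              ENNReal.ofNat_ne_top, mul_one]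
          _ ≤ _ := by gcongr; exact hC j (Nat.lt_succ_iff.1 (Finset.mem_range.1 hj))
    _ = 2 * μ (⋃ j ∈ Finset.range (m + 1), A j ∩ C j) := by
        rw [← Finset.mul_sum, measure_biUnion_finset
          (fun i _ j _ hij => ((pairwise_disjoint_firstPassageSet _ hij).mono
            inter_subset_left inter_subset_left))
          fun j _ => ((hle j) _ (measurableSet_firstPassageSet_past _ j)).inter (hCm j)]
    _ ≤ 2 * μ {ω | a < |∑ i ∈ Finset.range m, X i ω|} := by
        gcongr
        exact iUnion₂_subset fun j hj =>
          firstPassageSet_inter_subset (Nat.lt_succ_iff.1 (Finset.mem_range.1 hj))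

end Ottaviani

/-- The maximum of `|B|` over the dyadic times of `[0, s]`: on continuous paths it is the running
maximum of `|B|`, and, unlike the latter, it is jointly measurable in `(s, ω)`. -/
def dyadicRunningMax (B : ℝ → Ω → ℝ) (s : ℝ) (ω : Ω) : ℝ≥0∞ :=
  ⨆ (n : ℕ) (j : ℕ) (_ : (j : ℝ) / 2 ^ n ≤ s), ENNReal.ofReal |B (j / 2 ^ n) ω|

lemma measurable_dyadicRunningMax {B : ℝ → Ω → ℝ} (hB : ∀ t, Measurable (B t)) :
    Measurable (Function.uncurry (dyadicRunningMax B)) := by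
  change Measurable fun p : ℝ × Ω => dyadicRunningMax B p.1 p.2
  refine Measurable.iSup fun n => Measurable.iSup fun j => ?_
  simp only [iSup_eq_if]
  exact Measurable.ite (measurableSet_le measurable_const measurable_fst)
    ((hB _).abs.ennreal_ofReal.comp measurable_snd) measurable_const

section FirstExit

variable {f : ℝ → ℝ} {t₀ ε : ℝ}

lemma exists_ge_lt_abs_of_unbounded (hc : Continuous f) (hf : ∀ R : ℝ, ∃ n : ℕ, R < |f n|)
    (t₀ R : ℝ) : ∃ t, t₀ ≤ t ∧ R < |f t| := by
  obtain ⟨K, hK⟩ := isCompact_Icc.exists_bound_of_continuousOn (hc.continuousOn (s := Icc 0 t₀))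
  obtain ⟨n, hn⟩ := hf (max R K)
  refine ⟨n, le_of_not_gt fun hlt => ?_, (le_max_left R K).trans_lt hn⟩
  have := hK n ⟨n.cast_nonneg, hlt.le⟩
  rw [Real.norm_eq_abs] at this
  linarith [le_max_right R K]

lemma exists_exit_le (hc : Continuous f) (hε : 0 < ε) {u : ℝ} (hu : t₀ ≤ u)
    (hεu : ε ≤ |f u - f t₀|) : ∃ x ∈ {t | t₀ < t ∧ |f t - f t₀| = ε}, x ≤ u := by
  obtain ⟨x, hx, hxε⟩ := intermediate_value_Icc hu ((hc.sub continuous_const).abs.continuousOn)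
    (show ε ∈ Icc |f t₀ - f t₀| |f u - f t₀| by simp [hε.le, hεu])
  refine ⟨x, ⟨lt_of_le_of_ne hx.1 ?_, hxε⟩, hx.2⟩
  rintro rfl
  exact hε.ne (by simpa using hxε)

lemma sInf_exit_mem (hc : Continuous f) (hε : 0 < ε) {u : ℝ} (hu : t₀ ≤ u)
    (hεu : ε ≤ |f u - f t₀|) :
    sInf {t | t₀ < t ∧ |f t - f t₀| = ε} ∈ {t | t₀ < t ∧ |f t - f t₀| = ε} := by
  obtain ⟨x, hx, -⟩ := exists_exit_le hc hε hu hεu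
  -- closed, because `t₀` itself lies below the level `ε`
  have hS : {t | t₀ < t ∧ |f t - f t₀| = ε} = Ici t₀ ∩ (fun t => |f t - f t₀|) ⁻¹' {ε} := by
    ext t
    refine ⟨fun h => ⟨h.1.le, h.2⟩, fun h => ⟨lt_of_le_of_ne h.1 ?_, h.2⟩⟩
    rintro rfl
    exact hε.ne (by simpa using h.2)
  rw [hS] at hx ⊢
  exact (isClosed_Ici.inter (isClosed_singleton.preimage (hc.sub continuous_const).abs)).csInf_mem
    ⟨x, hx⟩ ⟨t₀, fun t ht => ht.1⟩

lemma abs_sub_lt_of_lt_sInf_exit (hc : Continuous f) (hε : 0 < ε) {u : ℝ} (hu : t₀ ≤ u)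
    (hlt : u < sInf {t | t₀ < t ∧ |f t - f t₀| = ε}) : |f u - f t₀| < ε := by
  by_contra! h
  obtain ⟨x, hx, hxu⟩ := exists_exit_le hc hε hu h
  exact (hxu.trans_lt hlt).not_ge (csInf_le ⟨t₀, fun t ht => ht.1.le⟩ hx)

end FirstExit

section Kernel

variable {H t s : ℝ}

lemma rho2_nonneg (hs : 0 ≤ s) (hst : s ≤ t) : 0 ≤ rho2 H t s :=
  mul_nonneg (Real.rpow_nonneg hs _) (intervalIntegral.integral_nonneg hst fun _ hu =>
    mul_nonneg (Real.rpow_nonneg (hs.trans hu.1) _) (Real.rpow_nonneg (sub_nonneg.2 hu.1) _))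

lemma rho2_le {T : ℝ} (hH : 1 / 2 < H) (hs : 0 < s) (hst : s ≤ t) (htT : t ≤ T) :
    rho2 H t s ≤ T ^ (2 * H - 1) / (2 * H - 1) * s ^ (-H - 1 / 2) := by
  have hu0 : ∀ u ∈ Icc s t, 0 < u := fun u hu => hs.trans_le hu.1
  have hint : ∫ u in s..t, u ^ (H - 3 / 2) * (u - s) ^ (H - 1 / 2) ≤
      ∫ u in s..t, u ^ (2 * H - 2) := by
    refine intervalIntegral.integral_mono_on hst ?_ ?_ fun u hu => ?_
    · refine ContinuousOn.intervalIntegrable_of_Icc hst ?_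
      exact (continuousOn_id.rpow_const fun u hu => Or.inl (hu0 u hu).ne').mul
        ((continuousOn_id.sub continuousOn_const).rpow_const fun _ _ => Or.inr (by linarith))
    · exact ContinuousOn.intervalIntegrable_of_Icc hst
        (continuousOn_id.rpow_const fun u hu => Or.inl (hu0 u hu).ne')
    · calc u ^ (H - 3 / 2) * (u - s) ^ (H - 1 / 2) ≤ u ^ (H - 3 / 2) * u ^ (H - 1 / 2) :=
            mul_le_mul_of_nonneg_left (Real.rpow_le_rpow (sub_nonneg.2 hu.1) (by linarith)
              (by linarith)) (Real.rpow_nonneg (hu0 u hu).le _)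
        _ = u ^ (2 * H - 2) := by rw [← Real.rpow_add (hu0 u hu)]; ring_nf
  have hpow : ∫ u in s..t, u ^ (2 * H - 2) ≤ T ^ (2 * H - 1) / (2 * H - 1) := by
    rw [integral_rpow (Or.inl (by linarith)), show 2 * H - 2 + 1 = 2 * H - 1 by ring]
    gcongr
    · linarith
    · linarith [Real.rpow_nonneg hs.le (2 * H - 1),
        Real.rpow_le_rpow (hs.le.trans hst) htT (by linarith : 0 ≤ 2 * H - 1)]
  rw [rho2, mul_comm]
  exact mul_le_mul_of_nonneg_right (hint.trans hpow) (Real.rpow_nonneg hs.le _)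

end Kernel

section Paths

variable {α : Type} {B : ℝ → α → ℝ} {ε : ℝ} {ω : α}

lemma ofReal_abs_le_dyadicRunningMax (hc : Continuous fun t => B t ω) {s u : ℝ}
    (hu : 0 ≤ u) (hus : u ≤ s) : ENNReal.ofReal |B u ω| ≤ dyadicRunningMax B s ω := by
  have hlim : Tendsto (fun n : ℕ => (⌊u * 2 ^ n⌋₊ : ℝ) / 2 ^ n) atTop (𝓝 u) :=
    (tendsto_nat_floor_mul_div_atTop hu).comp (tendsto_pow_atTop_atTop_of_one_lt one_lt_two)
  refine le_of_tendsto' (((ENNReal.continuous_ofReal.comp hc.abs).tendsto u).comp hlim)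
    fun n => le_iSup₂_of_le n ⌊u * 2 ^ n⌋₊ (le_iSup_of_le ?_ le_rfl)
  rw [div_le_iff₀ (by positivity)]
  exact (Nat.floor_le (by positivity)).trans (by gcongr)

lemma hitT_succ_spec (hc : Continuous fun t => B t ω) (hunb : ∀ R : ℝ, ∃ n : ℕ, R < |B n ω|)
    (hε : 0 < ε) (n : ℕ) :
    hitT B ε n ω < hitT B ε (n + 1) ω ∧ |B (hitT B ε (n + 1) ω) ω - B (hitT B ε n ω) ω| = ε := by
  set t₀ := hitT B ε n ω
  obtain ⟨u, hu, hR⟩ := exists_ge_lt_abs_of_unbounded hc hunb t₀ (|B t₀ ω| + ε)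
  exact sInf_exit_mem hc hε hu (by linarith [abs_sub_abs_le_abs_sub (B u ω) (B t₀ ω)])

lemma abs_sub_hitT_lt (hc : Continuous fun t => B t ω) (hε : 0 < ε) {n : ℕ} {u : ℝ}
    (h₁ : hitT B ε n ω ≤ u) (h₂ : u < hitT B ε (n + 1) ω) :
    |B u ω - B (hitT B ε n ω) ω| < ε :=
  abs_sub_lt_of_lt_sInf_exit hc hε h₁ h₂

lemma monotone_hitT (hc : Continuous fun t => B t ω) (hunb : ∀ R : ℝ, ∃ n : ℕ, R < |B n ω|)
    (hε : 0 < ε) : Monotone fun n => hitT B ε n ω :=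
  monotone_nat_of_le_succ fun n => (hitT_succ_spec hc hunb hε n).1.le

lemma tendsto_hitT_atTop (hc : Continuous fun t => B t ω)
    (hunb : ∀ R : ℝ, ∃ n : ℕ, R < |B n ω|) (hε : 0 < ε) :
    Tendsto (fun n => hitT B ε n ω) atTop atTop := by
  refine (tendsto_atTop_of_monotone (monotone_hitT hc hunb hε)).resolve_right
    fun ⟨L, hL⟩ => hε.ne ?_
  -- otherwise the increments `|B (T_{n+1}) - B (T_n)| = ε` would tend to `0`
  have hB := (hc.tendsto L).comp hL
  have hinc : Tendsto (fun n => |B (hitT B ε (n + 1) ω) ω - B (hitT B ε n ω) ω|) atTop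
      (𝓝 |B L ω - B L ω|) := ((hB.comp (tendsto_add_atTop_nat 1)).sub hB).abs
  rw [sub_self, abs_zero] at hinc
  exact tendsto_nhds_unique hinc
    (tendsto_const_nhds.congr fun n => (hitT_succ_spec hc hunb hε n).2.symm)

lemma exists_hitT_le_lt (hc : Continuous fun t => B t ω)
    (hunb : ∀ R : ℝ, ∃ n : ℕ, R < |B n ω|) (hε : 0 < ε) {s : ℝ} (hs : 0 ≤ s) :
    ∃ N : ℕ, hitT B ε N ω ≤ s ∧ s < hitT B ε (N + 1) ω := by
  obtain ⟨N, h₁, h₂⟩ := Nat.exists_not_and_succ_of_not_zero_of_exists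
    (p := fun n => s < hitT B ε n ω) (not_lt.2 hs)
    ((tendsto_hitT_atTop hc hunb hε).eventually_gt_atTop s).exists
  exact ⟨N, not_lt.1 h₁, h₂⟩

lemma mul_wSign_succ (hc : Continuous fun t => B t ω) (hunb : ∀ R : ℝ, ∃ n : ℕ, R < |B n ω|)
    (hε : 0 < ε) (n : ℕ) :
    ε * wSign B ε (n + 1) ω = B (hitT B ε (n + 1) ω) ω - B (hitT B ε n ω) ω := by
  have habs := (hitT_succ_spec hc hunb hε n).2
  rw [wSign, Nat.add_sub_cancel]
  split_ifs with hpos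
  · rw [abs_of_pos hpos] at habs; rw [habs, mul_one]
  · rw [abs_of_nonpos (not_lt.1 hpos)] at habs; linarith

lemma walk_eq_of_hitT_le_lt (hc : Continuous fun t => B t ω)
    (hunb : ∀ R : ℝ, ∃ n : ℕ, R < |B n ω|) (hε : 0 < ε) (h0 : B 0 ω = 0) {s : ℝ} {N : ℕ}
    (h₁ : hitT B ε N ω ≤ s) (h₂ : s < hitT B ε (N + 1) ω) :
    walk B ε s ω = B (hitT B ε N ω) ω := by
  have hmono := monotone_hitT hc hunb hε
  rw [walk, tsum_eq_sum (s := Finset.range N) fun n hn => if_neg fun hle =>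
    h₂.not_ge ((hmono (by simpa using hn : N + 1 ≤ n + 1)).trans hle)]
  rw [Finset.sum_congr rfl fun n hn => if_pos ((hmono (Finset.mem_range.1 hn)).trans h₁),
    Finset.sum_congr rfl fun n _ => mul_wSign_succ hc hunb hε n,
    Finset.sum_range_sub (fun n => B (hitT B ε n ω) ω)]
  simp [hitT, h0]

lemma abs_walk_sub_le (hc : Continuous fun t => B t ω)
    (hunb : ∀ R : ℝ, ∃ n : ℕ, R < |B n ω|) (hε : 0 < ε) (h0 : B 0 ω = 0) {s : ℝ}
    (hs : 0 ≤ s) : |walk B ε s ω - B s ω| ≤ ε := by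
  obtain ⟨N, h₁, h₂⟩ := exists_hitT_le_lt hc hunb hε hs
  rw [walk_eq_of_hitT_le_lt hc hunb hε h0 h₁ h₂, abs_sub_comm]
  exact (abs_sub_hitT_lt hc hε h₁ h₂).le

lemma ofReal_abs_walk_sub_le (hc : Continuous fun t => B t ω)
    (hunb : ∀ R : ℝ, ∃ n : ℕ, R < |B n ω|) (hε : 0 < ε) (h0 : B 0 ω = 0) {s : ℝ}
    (hs : 0 ≤ s) :
    ENNReal.ofReal |walk B ε s ω - B s ω| ≤ min (ENNReal.ofReal ε) (dyadicRunningMax B s ω) := by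
  have hwalk := ENNReal.ofReal_le_ofReal (abs_walk_sub_le hc hunb hε h0 hs)
  refine le_min hwalk ?_
  by_cases hM : ENNReal.ofReal ε ≤ dyadicRunningMax B s ω
  · exact hwalk.trans hM
  -- otherwise `|B| < ε` on `[0, s]`, so the walk has not moved yet
  have hT₁ : s < hitT B ε 1 ω := by
    by_contra! h
    have hexit := (hitT_succ_spec hc hunb hε 0).2
    rw [show hitT B ε 0 ω = 0 from rfl, h0, sub_zero] at hexit
    refine hM ((ENNReal.ofReal_le_ofReal hexit.ge).trans ?_)
    exact ofReal_abs_le_dyadicRunningMax hc (hitT_succ_spec hc hunb hε 0).1.le h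
  rw [walk_eq_of_hitT_le_lt hc hunb hε h0 (N := 0) hs hT₁]
  simpa [hitT, h0] using ofReal_abs_le_dyadicRunningMax hc hs le_rfl

lemma lastT_nonneg {t : ℝ} (ht : 0 ≤ t) : 0 ≤ lastT B ε t ω :=
  le_csSup ⟨t, fun _ hr => hr.2⟩ ⟨⟨0, rfl⟩, ht⟩

lemma lastT_le {t : ℝ} (ht : 0 ≤ t) : lastT B ε t ω ≤ t :=
  csSup_le ⟨0, ⟨0, rfl⟩, ht⟩ fun _ hr => hr.2

lemma ofReal_integral_rho2_le (hc : Continuous fun t => B t ω)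
    (hunb : ∀ R : ℝ, ∃ n : ℕ, R < |B n ω|) (h0 : B 0 ω = 0) {τ T H : ℝ} (hε : 0 < ε)
    (hH : 1 / 2 < H) (hτ0 : 0 ≤ τ) (hτT : τ ≤ T) :
    ENNReal.ofReal (∫ s in (0 : ℝ)..τ, rho2 H τ s * |walk B ε s ω - B s ω|) ≤
      ENNReal.ofReal (T ^ (2 * H - 1) / (2 * H - 1)) * ∫⁻ s in Ioc 0 T,
        ENNReal.ofReal (s ^ (-H - 1 / 2)) * min (ENNReal.ofReal ε) (dyadicRunningMax B s ω) := by
  rw [intervalIntegral.integral_of_le hτ0, ← lintegral_const_mul' _ _ ENNReal.ofReal_ne_top]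
  refine (ofReal_integral_le_lintegral_ofReal (ae_restrict_of_forall_mem measurableSet_Ioc
    fun s hs => mul_nonneg (rho2_nonneg hs.1.le hs.2) (abs_nonneg _))).trans ?_
  refine (setLIntegral_mono' measurableSet_Ioc fun s hs => ?_).trans
    (lintegral_mono_set (Ioc_subset_Ioc_right hτT))
  rw [ENNReal.ofReal_mul (rho2_nonneg hs.1.le hs.2), ← mul_assoc,
    ← ENNReal.ofReal_mul (div_nonneg (Real.rpow_nonneg (hτ0.trans hτT) _) (by linarith))]
  exact mul_le_mul' (ENNReal.ofReal_le_ofReal (rho2_le hH hs.1 hs.2 hτT))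
    (ofReal_abs_walk_sub_le hc hunb hε h0 hs.1.le)

end Paths

namespace IsBM

variable {P : Measure Ω} {B : ℝ → Ω → ℝ}

lemma measure_lt_abs_sub_le (hB : IsBM P B) {s t a : ℝ} (hs : 0 ≤ s) (hst : s ≤ t) (ha : 0 < a) :
    P {ω | a < |B t ω - B s ω|} ≤ ENNReal.ofReal ((t - s) / a ^ 2) := by
  have hm : Measurable fun ω => B t ω - B s ω := (hB.meas t).sub (hB.meas s)
  change P ((fun ω => B t ω - B s ω) ⁻¹' {x | a < |x|}) ≤ _
  rw [← Measure.map_apply hm (measurableSet_lt measurable_const measurable_abs),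
    hB.gauss s t hs hst]
  simpa [Real.coe_toNNReal _ (sub_nonneg.2 hst)] using gaussianReal_lt_abs_le (t - s).toNNReal ha

lemma measure_abs_sub_le_le (hB : IsBM P B) {t : ℝ} (ht : 0 < t) (R : ℝ) :
    P {ω | |B t ω - B 0 ω| ≤ R} ≤ ENNReal.ofReal ((√(2 * Real.pi * t))⁻¹ * (2 * R)) := by
  have hm : Measurable fun ω => B t ω - B 0 ω := (hB.meas t).sub (hB.meas 0)
  have hset : {ω | |B t ω - B 0 ω| ≤ R} = (fun ω => B t ω - B 0 ω) ⁻¹' Icc (-R) R := by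
    ext ω; simp [abs_le]
  rw [hset, ← Measure.map_apply hm measurableSet_Icc, hB.gauss 0 t le_rfl ht.le]
  simpa [Real.coe_toNNReal _ ht.le] using
    gaussianReal_Icc_le (v := (t - 0).toNNReal) (by simpa using ht) R

lemma ae_exists_nat_lt_abs [IsProbabilityMeasure P] (hB : IsBM P B) :
    ∀ᵐ ω ∂P, ∀ R : ℝ, ∃ n : ℕ, R < |B n ω| := by
  have hnull : ∀ R : ℕ, P {ω | ∀ n : ℕ, |B n ω| ≤ R} = 0 := fun R => by
    have hc : Tendsto (fun n : ℕ => (√(2 * Real.pi * (n + 1 : ℕ)))⁻¹ * (2 * R)) atTop (𝓝 0) := by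
      have h : Tendsto (fun n : ℕ => √(2 * Real.pi * (n + 1 : ℕ))) atTop atTop :=
        Real.tendsto_sqrt_atTop.comp (Tendsto.const_mul_atTop (by positivity)
          (tendsto_natCast_atTop_atTop.comp (tendsto_add_atTop_nat 1)))
      simpa using (tendsto_inv_atTop_zero.comp h).mul_const (2 * (R : ℝ))
    refine le_antisymm (ge_of_tendsto' (ENNReal.ofReal_zero ▸ ENNReal.tendsto_ofReal hc)
      fun n => ?_) zero_le
    refine (measure_mono_ae (hB.start.mono fun ω h0 (hω : ∀ n : ℕ, |B n ω| ≤ R) => ?_)).trans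
      (hB.measure_abs_sub_le_le (t := (n + 1 : ℕ)) (by positivity) R)
    show |B (n + 1 : ℕ) ω - B 0 ω| ≤ R
    rw [h0, sub_zero]
    exact hω (n + 1)
  have hR : ∀ᵐ ω ∂P, ∀ R : ℕ, ∃ n : ℕ, (R : ℝ) < |B n ω| :=
    ae_all_iff.2 fun R => ae_iff.2 (by simpa only [not_exists, not_lt] using hnull R)
  filter_upwards [hR] with ω hω R
  obtain ⟨n, hn⟩ := hω ⌈R⌉₊
  exact ⟨n, (Nat.le_ceil R).trans_lt hn⟩

lemma measure_exists_lt_abs_le [IsProbabilityMeasure P] (hB : IsBM P B) {u : ℕ → ℝ}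
    (hu : Monotone u) (hu0 : u 0 = 0) (m : ℕ) {x : ℝ} (hx : 0 < x) :
    P {ω | ∃ j ≤ m, x < |B (u j) ω|} ≤ ENNReal.ofReal (8 * u m / x ^ 2) := by
  have hpos : ∀ i, 0 ≤ u i := fun i => hu0 ▸ hu (Nat.zero_le i)
  rcases le_or_gt 1 (8 * u m / x ^ 2) with hbig | hsmall
  · exact prob_le_one.trans (ENNReal.one_le_ofReal.2 hbig)
  have hsum : ∀ j k ω, j ≤ k →
      ∑ i ∈ Finset.Ico j k, (B (u (i + 1)) ω - B (u i) ω) = B (u k) ω - B (u j) ω :=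
    fun j k ω hjk => Finset.sum_Ico_sub (fun i => B (u i) ω) hjk
  have hsum₀ : ∀ j ω, ∑ i ∈ Finset.range j, (B (u (i + 1)) ω - B (u i) ω) = B (u j) ω - B 0 ω :=
    fun j ω => hu0 ▸ Finset.sum_range_sub (fun i => B (u i) ω) j
  have hm8 : 8 * u m < x ^ 2 := by rwa [div_lt_one (by positivity)] at hsmall
  have hott := measure_exists_lt_abs_partialSum_le (hB.indep u hu hpos)
    (fun i => (hB.meas _).sub (hB.meas _)) (m := m) (a := x / 2) fun j hj => by
      simp only [hsum _ _ _ hj]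
      refine (hB.measure_lt_abs_sub_le (hpos j) (hu hj) (by positivity)).trans ?_
      rw [← ENNReal.ofReal_ofNat 2, ← ENNReal.ofReal_inv_of_pos two_pos]
      refine ENNReal.ofReal_le_ofReal ?_
      rw [div_le_iff₀ (by positivity)]
      nlinarith [hpos j, hu hj]
  simp only [hsum₀] at hott
  calc P {ω | ∃ j ≤ m, x < |B (u j) ω|}
      ≤ P {ω | ∃ j ≤ m, 2 * (x / 2) < |B (u j) ω - B 0 ω|} := by
        refine measure_mono_ae (hB.start.mono fun ω h0 ⟨j, hj, hjx⟩ => ⟨j, hj, ?_⟩)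
        rwa [h0, sub_zero, mul_div_cancel₀ _ two_ne_zero]
    _ ≤ 2 * P {ω | x / 2 < |B (u m) ω - B 0 ω|} := hott
    _ ≤ 2 * ENNReal.ofReal ((u m - 0) / (x / 2) ^ 2) := by
        gcongr; exact hB.measure_lt_abs_sub_le le_rfl (hpos m) (by positivity)
    _ = ENNReal.ofReal (8 * u m / x ^ 2) := by
        rw [← ENNReal.ofReal_ofNat 2, ← ENNReal.ofReal_mul zero_le_two]
        congr 1; ring

lemma measure_lt_dyadicRunningMax_le [IsProbabilityMeasure P] (hB : IsBM P B) {s x : ℝ}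
    (hs : 0 ≤ s) (hx : 0 < x) :
    P {ω | ENNReal.ofReal x < dyadicRunningMax B s ω} ≤ ENNReal.ofReal (8 * s / x ^ 2) := by
  set E : ℕ → Set Ω := fun n => {ω | ∃ j ≤ ⌊s * 2 ^ n⌋₊, x < |B ((j : ℕ) / 2 ^ n) ω|}
  have hE : ∀ n, P (E n) ≤ ENNReal.ofReal (8 * s / x ^ 2) := fun n => by
    refine (hB.measure_exists_lt_abs_le (u := fun j : ℕ => (j : ℝ) / 2 ^ n)
      (fun i j hij => div_le_div_of_nonneg_right (Nat.cast_le.2 hij) (by positivity)) (by simp)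
      _ hx).trans (ENNReal.ofReal_le_ofReal ?_)
    gcongr
    rw [div_le_iff₀ (by positivity)]
    exact Nat.floor_le (by positivity)
  have hmono : Monotone E := monotone_nat_of_le_succ fun n ω ⟨j, hj, hjx⟩ => by
    refine ⟨2 * j, Nat.le_floor ?_, ?_⟩
    · have := (Nat.cast_le.2 hj).trans (Nat.floor_le (by positivity : 0 ≤ s * 2 ^ n))
      push_cast
      rw [pow_succ]
      linarith
    · have hdy : ((2 * j : ℕ) : ℝ) / 2 ^ (n + 1) = j / 2 ^ n := by
        push_cast
        rw [pow_succ]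
        field_simp
      rwa [hdy]
  have hsub : {ω | ENNReal.ofReal x < dyadicRunningMax B s ω} ⊆ ⋃ n, E n := fun ω hω => by
    simp only [dyadicRunningMax, lt_iSup_iff] at hω
    obtain ⟨n, j, hjs, hj⟩ := hω
    exact mem_iUnion.2 ⟨n, j, Nat.le_floor ((div_le_iff₀ (by positivity)).1 hjs),
      (ENNReal.ofReal_lt_ofReal_iff'.1 hj).1⟩
  calc _ ≤ P (⋃ n, E n) := measure_mono hsub
    _ = ⨆ n, P (E n) := hmono.measure_iUnion
    _ ≤ _ := iSup_le hE

lemma lintegral_min_dyadicRunningMax_le [IsProbabilityMeasure P] (hB : IsBM P B) {s e lam : ℝ}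
    (hs : 0 ≤ s) (he : 0 < e) (hlam0 : 0 ≤ lam) (hlam1 : lam < 1 / 2) :
    ∫⁻ ω, min (ENNReal.ofReal e) (dyadicRunningMax B s ω) ∂P ≤
      ENNReal.ofReal ((8 * s) ^ lam * (e ^ (1 - 2 * lam) / (1 - 2 * lam))) := by
  have hm : Measurable (dyadicRunningMax B s) :=
    (measurable_dyadicRunningMax hB.meas).of_uncurry_left
  refine (lintegral_min_le_of_meas_lt_le
    (g := fun t => ENNReal.ofReal ((8 * s) ^ lam * t ^ (-2 * lam))) hm.aemeasurable
    fun t ht => ?_).trans_eq ?_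
  · -- the tail `min 1 (8 s / t²)` of the maximal inequality, weakened to `(8 s / t²) ^ lam`
    refine le_min prob_le_one (hB.measure_lt_dyadicRunningMax_le hs ht.1) |>.trans ?_
    rw [← ENNReal.ofReal_one, ← ENNReal.ofReal_min]
    refine ENNReal.ofReal_le_ofReal
      ((min_one_le_rpow (by positivity) hlam0 (by linarith)).trans_eq ?_)
    rw [Real.div_rpow (by positivity) (by positivity), div_eq_mul_inv,
      ← Real.rpow_neg (by positivity), ← Real.rpow_natCast, ← Real.rpow_mul ht.1.le]
    push_cast
    ring_nf
  · have h8s : 0 ≤ (8 * s) ^ lam := Real.rpow_nonneg (by linarith) lam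
    calc ∫⁻ t in Ioc 0 e, ENNReal.ofReal ((8 * s) ^ lam * t ^ (-2 * lam))
        = ENNReal.ofReal ((8 * s) ^ lam) * ∫⁻ t in Ioc 0 e, ENNReal.ofReal (t ^ (-2 * lam)) := by
          simp_rw [ENNReal.ofReal_mul h8s]
          exact lintegral_const_mul' _ _ ENNReal.ofReal_ne_top
      _ = _ := by
          rw [lintegral_Ioc_rpow he.le (by linarith), ← ENNReal.ofReal_mul h8s]
          ring_nf

lemma lintegral_lintegral_rpow_mul_min_le [IsProbabilityMeasure P] (hB : IsBM P B)
    {e T H lam : ℝ} (he : 0 < e) (hT : 0 ≤ T) (hlam0 : 0 ≤ lam) (hlam1 : lam < 1 / 2)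
    (hHlam : H - 1 / 2 < lam) :
    ∫⁻ ω, (∫⁻ s in Ioc 0 T, ENNReal.ofReal (s ^ (-H - 1 / 2)) *
        min (ENNReal.ofReal e) (dyadicRunningMax B s ω)) ∂P ≤
      ENNReal.ofReal (8 ^ lam * (e ^ (1 - 2 * lam) / (1 - 2 * lam)) *
        (T ^ (lam - H + 1 / 2) / (lam - H + 1 / 2))) := by
  have hm : Measurable (Function.uncurry fun (ω : Ω) (s : ℝ) =>
      ENNReal.ofReal (s ^ (-H - 1 / 2)) * min (ENNReal.ofReal e) (dyadicRunningMax B s ω)) :=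
    ((measurable_fst.pow_const _).ennreal_ofReal.mul
      (measurable_const.min (measurable_dyadicRunningMax hB.meas))).comp measurable_swap
  have hc : 0 ≤ 8 ^ lam * (e ^ (1 - 2 * lam) / (1 - 2 * lam)) :=
    mul_nonneg (by positivity) (div_nonneg (Real.rpow_nonneg he.le _) (by linarith))
  rw [lintegral_lintegral_swap hm.aemeasurable]
  calc ∫⁻ s in Ioc 0 T, ∫⁻ ω, ENNReal.ofReal (s ^ (-H - 1 / 2)) *
        min (ENNReal.ofReal e) (dyadicRunningMax B s ω) ∂P
      ≤ ∫⁻ s in Ioc 0 T, ENNReal.ofReal (8 ^ lam * (e ^ (1 - 2 * lam) / (1 - 2 * lam))) *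
          ENNReal.ofReal (s ^ (lam - H - 1 / 2)) := by
        refine setLIntegral_mono' measurableSet_Ioc fun s hs => ?_
        rw [lintegral_const_mul' _ _ ENNReal.ofReal_ne_top]
        grw [hB.lintegral_min_dyadicRunningMax_le hs.1.le he hlam0 hlam1]
        refine le_of_eq ?_
        rw [← ENNReal.ofReal_mul (Real.rpow_nonneg hs.1.le _), ← ENNReal.ofReal_mul hc,
          Real.mul_rpow (by norm_num) hs.1.le,
          show lam - H - 1 / 2 = (-H - 1 / 2) + lam by ring, Real.rpow_add hs.1]
        ring_nf
    _ = _ := by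
        rw [lintegral_const_mul' _ _ ENNReal.ofReal_ne_top, lintegral_Ioc_rpow hT (by linarith),
          ← ENNReal.ofReal_mul hc]
        ring_nf

lemma integral_iSup_integral_rho2_le [IsProbabilityMeasure P] (hB : IsBM P B) {e T H lam : ℝ}
    (he : 0 < e) (hT : 0 ≤ T) (hH : 1 / 2 < H) (hlam1 : H - 1 / 2 < lam) (hlam2 : lam < 1 / 2) :
    ∫ ω, (⨆ t : Icc (0 : ℝ) T, ∫ s in (0 : ℝ)..(lastT B e t ω),
        rho2 H (lastT B e t ω) s * |walk B e s ω - B s ω|) ∂P ≤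
      T ^ (2 * H - 1) / (2 * H - 1) * (8 ^ lam * (e ^ (1 - 2 * lam) / (1 - 2 * lam)) *
        (T ^ (lam - H + 1 / 2) / (lam - H + 1 / 2))) := by
  set F : Ω → ℝ := fun ω => ⨆ t : Icc (0 : ℝ) T, ∫ s in (0 : ℝ)..(lastT B e t ω),
    rho2 H (lastT B e t ω) s * |walk B e s ω - B s ω|
  set K := T ^ (2 * H - 1) / (2 * H - 1)
  have hK : 0 ≤ K := div_nonneg (Real.rpow_nonneg hT _) (by linarith)
  have hF : ∀ ω, 0 ≤ F ω := fun ω =>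
    Real.iSup_nonneg fun t => intervalIntegral.integral_nonneg (lastT_nonneg t.2.1)
      fun s hs => mul_nonneg (rho2_nonneg hs.1 hs.2) (abs_nonneg _)
  refine (ENNReal.ofReal_le_ofReal_iff (mul_nonneg hK (mul_nonneg (mul_nonneg (by positivity)
    (div_nonneg (Real.rpow_nonneg he.le _) (by linarith)))
    (div_nonneg (Real.rpow_nonneg hT _) (by linarith))))).1 ?_
  calc ENNReal.ofReal (∫ ω, F ω ∂P) ≤ ∫⁻ ω, ENNReal.ofReal (F ω) ∂P :=
        ofReal_integral_le_lintegral_ofReal (ae_of_all _ hF)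
    _ ≤ ∫⁻ ω, ENNReal.ofReal K * (∫⁻ s in Ioc 0 T, ENNReal.ofReal (s ^ (-H - 1 / 2)) *
          min (ENNReal.ofReal e) (dyadicRunningMax B s ω)) ∂P := by
        refine lintegral_mono_ae ?_
        filter_upwards [hB.cont, hB.start, hB.ae_exists_nat_lt_abs] with ω hcont h0 hunb
        exact ofReal_iSup_le fun t => ofReal_integral_rho2_le hcont hunb h0 he hH
          (lastT_nonneg t.2.1) ((lastT_le t.2.1).trans t.2.2)
    _ ≤ ENNReal.ofReal K * ENNReal.ofReal (8 ^ lam * (e ^ (1 - 2 * lam) / (1 - 2 * lam)) *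
          (T ^ (lam - H + 1 / 2) / (lam - H + 1 / 2))) := by
        rw [lintegral_const_mul' _ _ ENNReal.ofReal_ne_top]
        gcongr
        exact hB.lintegral_lintegral_rpow_mul_min_le he hT (by linarith) hlam2 hlam1
    _ = _ := (ENNReal.ofReal_mul hK).symm

end IsBM

theorem rho2_error_bound_general
    (P : Measure Ω) [IsProbabilityMeasure P] (B : ℝ → Ω → ℝ) (hB : IsBM P B)
    (ε : ℕ → ℝ) (hε : ∀ k, 0 < ε k)
    (T : ℝ) (hT : 0 < T) (H lam : ℝ) (hH1 : 1 / 2 < H)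
    (hlam1 : H - 1 / 2 < lam) (hlam2 : lam < 1 / 2) :
    ∃ C : ℝ, 0 ≤ C ∧ ∀ k : ℕ, 1 ≤ k →
      ∫ ω, (⨆ t : Icc (0 : ℝ) T,
          ∫ s in (0 : ℝ)..(lastT B (ε k) (↑t) ω),
            rho2 H (lastT B (ε k) (↑t) ω) s * |walk B (ε k) s ω - B s ω|) ∂P ≤
        C * ε k ^ (1 - 2 * lam) := by
  set K := T ^ (2 * H - 1) / (2 * H - 1)
  refine ⟨K * (8 ^ lam / (1 - 2 * lam) * (T ^ (lam - H + 1 / 2) / (lam - H + 1 / 2))),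
    mul_nonneg (div_nonneg (Real.rpow_nonneg hT.le _) (by linarith))
      (mul_nonneg (div_nonneg (by positivity) (by linarith))
        (div_nonneg (Real.rpow_nonneg hT.le _) (by linarith))), fun k _ => ?_⟩
  exact (hB.integral_iSup_integral_rho2_le (hε k) hT.le hH1 hlam1 hlam2).trans_eq (by ring)

/-- For `1/2 < H < 1` and `H − 1/2 < λ < 1/2` there is a constant `C`,
depending only on `H`, `T` and `λ`, such that
`E[sup_{0≤t≤T} ∫_0^{t̄_k} ρ_{H,2}(t̄_k,s)|A^k(s) − B(s)| ds] ≤ C ε_k^{1−2λ}` for all `k`. -/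
theorem rho2_error_bound
    (P : Measure Ω) [IsProbabilityMeasure P] (B : ℝ → Ω → ℝ) (hB : IsBM P B)
    (ε : ℕ → ℝ) (hε : ∀ k, 0 < ε k) (hsum : Summable fun k => ε k ^ 2)
    (T : ℝ) (hT : 0 < T) (H lam : ℝ) (hH1 : 1 / 2 < H) (hH2 : H < 1)
    (hlam1 : H - 1 / 2 < lam) (hlam2 : lam < 1 / 2) :
    ∃ C : ℝ, 0 ≤ C ∧ ∀ k : ℕ, 1 ≤ k →
      ∫ ω, (⨆ t : Icc (0 : ℝ) T,
          ∫ s in (0 : ℝ)..(lastT B (ε k) (↑t) ω),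
            rho2 H (lastT B (ε k) (↑t) ω) s * |walk B (ε k) s ω - B s ω|) ∂P ≤
        C * ε k ^ (1 - 2 * lam) :=
  rho2_error_bound_general P B hB ε hε T hT H lam hH1 hlam1 hlam2
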